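/- For n agents with additive valuations where v_{i,i} = 1 and v_{i,j} = 0 for j ≠ i over n items, the allocation giving all items to agent 1 together with transfers t_1 = −(n−1)/n and t_i = 1/n for i ≠ 1 is envy-free, and its utilitarian welfare ratio to the optimum is exactly 1/n. -/

import Mathlib

/-- With `n` agents and `n` items, `v i j = 1` iff `i = j`, the allocation
giving all items to agent 1 together with transfers `t₁ = -(n-1)/n`, `t_i = 1/n` is
envy-free and its utilitarian welfare is exactly a `1/n` fraction of the optimum. -/
theorem stmt19 (n : ℕ) (hn : 0 < n)
    (v : Fin n → Fin n → ℝ) (hv : ∀ i j, v i j = if i = j then 1 else 0)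
    (A : Fin n → Finset (Fin n))
    (hA0 : A ⟨0, hn⟩ = Finset.univ) (hAi : ∀ i, i ≠ ⟨0, hn⟩ → A i = ∅)
    (t : Fin n → ℝ)
    (ht0 : t ⟨0, hn⟩ = -((n : ℝ) - 1) / n) (hti : ∀ i, i ≠ ⟨0, hn⟩ → t i = 1 / n) :
    ∑ i, t i = 0 ∧
    (∀ i j, (∑ g ∈ A i, v i g) + t i ≥ (∑ g ∈ A j, v i g) + t j) ∧
    ∃ Astar : Fin n → Finset (Fin n),
      (∀ x : Fin n, ∃! i, x ∈ Astar i) ∧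
      (∀ B : Fin n → Finset (Fin n), (∀ x : Fin n, ∃! i, x ∈ B i) →
        ∑ i, ∑ g ∈ B i, v i g ≤ ∑ i, ∑ g ∈ Astar i, v i g) ∧
      (∑ i, ∑ g ∈ A i, v i g) = (1 / (n : ℝ)) * ∑ i, ∑ g ∈ Astar i, v i g := by
  have hn0 : (n : ℝ) ≠ 0 := Nat.cast_ne_zero.mpr hn.ne'
  set z : Fin n := ⟨0, hn⟩ with hz
  -- value of a full bundle
  have hfull : ∀ i : Fin n, (∑ g : Fin n, v i g) = 1 := by
    intro i
    simp [hv, Finset.sum_ite_eq]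
  -- key: bundle value + transfer is 1/n for any column
  have key : ∀ i j : Fin n, (∑ g ∈ A j, v i g) + t j = 1 / n := by
    intro i j
    by_cases hj : j = z
    · subst hj
      rw [hA0, hfull, ht0]
      field_simp
      ring
    · rw [hAi j hj, hti j hj]
      simp
  refine ⟨?_, ?_, fun i => {i}, ?_, ?_, ?_⟩
  · -- transfers sum to zero
    rw [← Finset.add_sum_erase _ _ (Finset.mem_univ z), ht0,
        Finset.sum_congr rfl (fun i hi => hti i (Finset.mem_erase.mp hi).1)]
    rw [Finset.sum_const, Finset.card_erase_of_mem (Finset.mem_univ z),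
        Finset.card_univ, Fintype.card_fin]
    have h1 : 1 ≤ n := hn
    rw [nsmul_eq_mul, Nat.cast_sub h1]
    push_cast
    field_simp
    ring
  · intro i j
    rw [key i i, key i j]
  · intro x
    exact ⟨x, by simp, fun y hy => (by simpa using hy : x = y).symm⟩
  · intro B hB
    have h1 : ∀ i : Fin n, (∑ g ∈ B i, v i g) ≤ 1 := by
      intro i
      simp only [hv]
      rw [Finset.sum_ite_eq]
      split <;> norm_num
    calc ∑ i, ∑ g ∈ B i, v i g ≤ ∑ _i : Fin n, (1 : ℝ) :=
          Finset.sum_le_sum fun i _ => h1 i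
      _ = ∑ i : Fin n, ∑ g ∈ ({i} : Finset (Fin n)), v i g := by
          simp [hv]
  · have hwA : (∑ i, ∑ g ∈ A i, v i g) = 1 := by
      rw [← Finset.add_sum_erase _ _ (Finset.mem_univ z), hA0, hfull,
          Finset.sum_congr rfl (fun i hi => by
            rw [hAi i (Finset.mem_erase.mp hi).1, Finset.sum_empty])]
      simp
    have hwS : (∑ i : Fin n, ∑ g ∈ ({i} : Finset (Fin n)), v i g) = n := by
      simp [hv]
    rw [hwA, hwS]
    field_simp
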